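/- Let $m,p>0$ with $mp>1$, $C>0$, and $\lambda = -C^{mp-1}\frac{p(m+1)(m(1+p))^{p}}{(mp-1)^{1+p}}$, $t_* = \frac{1}{\lambda(1-mp)}$. Then the function $u(x,t)=C(-x)_+^{(1+p)/(mp-1)}\big[\lambda(t_*-t)(1-mp)\big]^{1/(1-mp)}$ satisfies $u_t=\big(|(u^m)_x|^{p-1}(u^m)_x\big)_x$ at every point with $x<0$ and $0\le t<t_*$. In particular, the interface $\eta(t)=\sup\{x:u(x,t)>0\}=0$ remains stationary for $0\le t<t_*$. -/

import Mathlib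

open Real

/-- positive part -/
noncomputable def pp (s : ℝ) : ℝ := max s 0

/-!
The solution separates as `u = C (-x)^α T(t)^β` with `α = (1+p)/(mp-1)`, `β = 1/(1-mp)` and
`T(t) = λ(t* - t)(1-mp) = 1 - λ(1-mp) t`. For `x < 0` the profile `(u^m)(x) = k (-x)^{αm}` is a
pure power, so the flux is again a pure power and its derivative is a multiple of `(-x)^α`,
because `(αm - 1)p - 1 = α`. Matching the two sides in `t` uses `βmp = β - 1`, and matching the
constants is exactly the choice of `λ`. Since `u(·, t) > 0` precisely on `x < 0`, the interface
sits at `0`.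
-/

lemma pp_of_nonneg {s : ℝ} (hs : 0 ≤ s) : pp s = s := max_eq_left hs

lemma pp_of_nonpos {s : ℝ} (hs : s ≤ 0) : pp s = 0 := max_eq_right hs

lemma pp_rpow_pos_iff {s a : ℝ} (ha : 0 < a) : 0 < pp s ^ a ↔ 0 < s := by
  refine ⟨fun h => ?_, fun hs => by rw [pp_of_nonneg hs.le]; positivity⟩
  by_contra! hs
  rw [pp_of_nonpos hs, zero_rpow ha.ne'] at h
  exact h.false

lemma hasDerivAt_const_mul_neg_rpow (k b : ℝ) {y : ℝ} (hy : y < 0) :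
    HasDerivAt (fun z => k * (-z) ^ b) (-(k * b * (-y) ^ (b - 1))) y := by
  have hy' : -y ≠ 0 := by linarith
  exact (((hasDerivAt_neg y).rpow_const (p := b) (Or.inl hy')).const_mul k).congr_deriv (by ring)

lemma eqOn_rpow_mul_pp_neg_rpow {c d a m : ℝ} (hc : 0 ≤ c) (hd : 0 ≤ d) :
    Set.EqOn (fun z => (c * pp (-z) ^ a * d) ^ m) (fun z => (c * d) ^ m * (-z) ^ (a * m))
      (Set.Iio 0) := by
  intro z (hz : z < 0)
  have hz' : 0 ≤ -z := by linarith
  simp only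
  rw [pp_of_nonneg hz', mul_right_comm, mul_rpow (mul_nonneg hc hd) (rpow_nonneg hz' a),
    ← rpow_mul hz']

section Flux

variable {f : ℝ → ℝ} {k b : ℝ}

lemma flux_eq_of_eqOn_Iio (p : ℝ) (hf : Set.EqOn f (fun z => k * (-z) ^ b) (Set.Iio 0))
    (hkb : 0 < k * b) {y : ℝ} (hy : y < 0) :
    |deriv f y| ^ (p - 1) * deriv f y = -(k * b) ^ p * (-y) ^ ((b - 1) * p) := by
  have hfy : deriv f y = -(k * b * (-y) ^ (b - 1)) := by
    rw [(hf.eventuallyEq_of_mem (Iio_mem_nhds hy)).deriv_eq,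
      (hasDerivAt_const_mul_neg_rpow k b hy).deriv]
  have hs : 0 < k * b * (-y) ^ (b - 1) := mul_pos hkb (rpow_pos_of_pos (by linarith) _)
  rw [hfy, abs_neg, abs_of_pos hs, mul_neg, ← rpow_add_one hs.ne', sub_add_cancel,
    mul_rpow hkb.le (rpow_nonneg (by linarith) _), ← rpow_mul (by linarith), neg_mul]

lemma deriv_flux_eq_of_eqOn_Iio (p : ℝ) (hf : Set.EqOn f (fun z => k * (-z) ^ b) (Set.Iio 0))
    (hkb : 0 < k * b) {x : ℝ} (hx : x < 0) :
    deriv (fun y => |deriv f y| ^ (p - 1) * deriv f y) x =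
      (k * b) ^ p * ((b - 1) * p) * (-x) ^ ((b - 1) * p - 1) := by
  have hflux : (fun y => |deriv f y| ^ (p - 1) * deriv f y) =ᶠ[nhds x]
      fun y => -(k * b) ^ p * (-y) ^ ((b - 1) * p) := by
    filter_upwards [Iio_mem_nhds hx] with y hy
    exact flux_eq_of_eqOn_Iio p hf hkb hy
  rw [hflux.deriv_eq, (hasDerivAt_const_mul_neg_rpow _ _ hx).deriv]
  ring

end Flux

lemma hasDerivAt_time_factor {lam tstar q t : ℝ} (hq : q ≠ 1)
    (hT : 0 < lam * (tstar - t) * (1 - q)) :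
    HasDerivAt (fun τ => (lam * (tstar - τ) * (1 - q)) ^ (1 / (1 - q)))
      (-lam * (lam * (tstar - t) * (1 - q)) ^ (1 / (1 - q) - 1)) t := by
  have hq' : (1 : ℝ) - q ≠ 0 := sub_ne_zero.mpr (Ne.symm hq)
  refine (((((hasDerivAt_id' t).const_sub tstar).const_mul lam).mul_const (1 - q)).rpow_const
    (p := 1 / (1 - q)) (Or.inl hT.ne')).congr_deriv ?_
  field_simp

lemma one_div_one_sub_mul_self {q : ℝ} (hq : q ≠ 1) : 1 / (1 - q) * q = 1 / (1 - q) - 1 := by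
  have : (1 : ℝ) - q ≠ 0 := sub_ne_zero.mpr (Ne.symm hq)
  field_simp
  ring

lemma time_factor_pos {lam tstar q t : ℝ} (hlam : lam < 0) (hq : 1 < q) (ht : t < tstar) :
    0 < lam * (tstar - t) * (1 - q) := by
  rw [mul_right_comm]
  exact mul_pos (mul_pos_of_neg_of_neg hlam (by linarith)) (by linarith)

lemma deriv_separable_eq_deriv_flux {m p C α lam tstar x t : ℝ} (hm : 0 < m) (hC : 0 < C)
    (hα : 0 < α) (hmp : m * p ≠ 1) (hexp : (α * m - 1) * p - 1 = α)
    (hconst : -lam * C = C ^ (m * p) * (α * m) ^ p * ((α * m - 1) * p)) (hx : x < 0)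
    (hT : 0 < lam * (tstar - t) * (1 - m * p)) :
    let u : ℝ → ℝ → ℝ := fun x t =>
      C * pp (-x) ^ α * (lam * (tstar - t) * (1 - m * p)) ^ (1 / (1 - m * p))
    deriv (fun τ => u x τ) t =
      deriv (fun y => |deriv (fun z => u z t ^ m) y| ^ (p - 1) *
        deriv (fun z => u z t ^ m) y) x := by
  intro u
  set β := 1 / (1 - m * p)
  set T := lam * (tstar - t) * (1 - m * p)
  have hprofile : Set.EqOn (fun z => u z t ^ m) (fun z => (C * T ^ β) ^ m * (-z) ^ (α * m))
      (Set.Iio 0) :=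
    eqOn_rpow_mul_pp_neg_rpow hC.le (rpow_nonneg hT.le _)
  have hk : 0 < (C * T ^ β) ^ m := by positivity
  have hu : HasDerivAt (fun τ => u x τ) (C * pp (-x) ^ α * (-lam * T ^ (β - 1))) t :=
    (hasDerivAt_time_factor hmp hT).const_mul _
  have hcoef : ((C * T ^ β) ^ m) ^ p = C ^ (m * p) * T ^ (β - 1) := by
    have hβ : β * (m * p) = β - 1 := one_div_one_sub_mul_self hmp
    rw [← rpow_mul (by positivity), mul_rpow hC.le (by positivity), ← rpow_mul hT.le, hβ]
  rw [hu.deriv, deriv_flux_eq_of_eqOn_Iio p hprofile (by positivity) hx,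
    pp_of_nonneg (by linarith), hexp, mul_rpow hk.le (mul_pos hα hm).le, hcoef]
  linear_combination ((-x) ^ α * T ^ (β - 1)) * hconst

lemma sSup_pos_pp_neg_eq_zero {c a d : ℝ} (hc : 0 < c) (ha : 0 < a) (hd : 0 < d) :
    sSup {x : ℝ | 0 < c * pp (-x) ^ a * d} = 0 := by
  have hpos : {x : ℝ | 0 < c * pp (-x) ^ a * d} = Set.Iio 0 := by
    ext x
    rw [Set.mem_ofPred_eq, Set.mem_Iio, mul_pos_iff_of_pos_right hd, mul_pos_iff_of_pos_left hc,
      pp_rpow_pos_iff ha, neg_pos]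
  rw [hpos, csSup_Iio]

lemma flux_exponent_eq {m p : ℝ} (hmp : m * p ≠ 1) :
    ((1 + p) / (m * p - 1) * m - 1) * p - 1 = (1 + p) / (m * p - 1) := by
  have hq : m * p - 1 ≠ 0 := sub_ne_zero.mpr hmp
  rw [div_mul_eq_mul_div, div_sub_one hq, div_mul_eq_mul_div, div_sub_one hq,
    div_eq_div_iff hq hq]
  ring

lemma neg_lam_mul_eq {m p C : ℝ} (hm : 0 < m) (hp : 0 < p) (hmp : 1 < m * p) (hC : 0 < C) :
    -(-C ^ (m * p - 1) * (p * (m + 1) * (m * (1 + p)) ^ p / (m * p - 1) ^ (1 + p))) * C =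
      C ^ (m * p) * ((1 + p) / (m * p - 1) * m) ^ p * (((1 + p) / (m * p - 1) * m - 1) * p) := by
  have hq : 0 < m * p - 1 := by linarith
  have hCmp : C ^ (m * p) = C ^ (m * p - 1) * C := by
    rw [← rpow_add_one hC.ne', sub_add_cancel]
  have hαm : (1 + p) / (m * p - 1) * m = m * (1 + p) / (m * p - 1) := by ring
  have hαm1 : (1 + p) / (m * p - 1) * m - 1 = (m + 1) / (m * p - 1) := by
    rw [div_mul_eq_mul_div, div_sub_one hq.ne']
    ring
  rw [hCmp, hαm1, hαm, div_rpow (by positivity) hq.le, add_comm 1 p, rpow_add_one hq.ne']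
  have : 0 < (m * p - 1) ^ p := rpow_pos_of_pos hq p
  field_simp

/-- the explicit solution
`u(x,t) = C(-x)_+^{(1+p)/(mp-1)} [λ (t*-t)(1-mp)]^{1/(1-mp)}` (with
`λ = -C^{mp-1} p(m+1)(m(1+p))^p/(mp-1)^{1+p}`, `t* = 1/(λ(1-mp))`)
solves `u_t = (|(u^m)_x|^{p-1}(u^m)_x)_x` for `x < 0`, `0 ≤ t < t*`,
and its interface `η(t) = sup {x : u(x,t) > 0} = 0` remains stationary. -/
theorem stmt3 (m p C : ℝ) (hm : 0 < m) (hp : 0 < p) (hmp : 1 < m * p)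
    (hC : 0 < C) :
    let lam : ℝ := -C ^ (m * p - 1) * (p * (m + 1) * (m * (1 + p)) ^ p /
      (m * p - 1) ^ (1 + p))
    let tstar : ℝ := 1 / (lam * (1 - m * p))
    let u : ℝ → ℝ → ℝ := fun x t =>
      C * (pp (-x)) ^ ((1 + p) / (m * p - 1)) *
        (lam * (tstar - t) * (1 - m * p)) ^ (1 / (1 - m * p))
    (∀ x t : ℝ, x < 0 → 0 ≤ t → t < tstar →
      deriv (fun τ => u x τ) t =
        deriv (fun y => |deriv (fun z => (u z t) ^ m) y| ^ (p - 1) *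
          deriv (fun z => (u z t) ^ m) y) x) ∧
    (∀ t : ℝ, 0 ≤ t → t < tstar → sSup {x : ℝ | 0 < u x t} = 0) := by
  intro lam tstar u
  have hq : 0 < m * p - 1 := by linarith
  have hα : 0 < (1 + p) / (m * p - 1) := by positivity
  have hlam : lam < 0 := by
    have := rpow_pos_of_pos hq (1 + p)
    have : 0 < C ^ (m * p - 1) * (p * (m + 1) * (m * (1 + p)) ^ p / (m * p - 1) ^ (1 + p)) := by
      positivity
    simp only [lam, neg_mul]
    linarith
  refine ⟨fun x t hx _ ht => ?_, fun t _ ht => ?_⟩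
  · exact deriv_separable_eq_deriv_flux hm hC hα hmp.ne' (flux_exponent_eq hmp.ne')
      (neg_lam_mul_eq hm hp hmp hC) hx (time_factor_pos hlam hmp ht)
  · exact sSup_pos_pp_neg_eq_zero hC hα (rpow_pos_of_pos (time_factor_pos hlam hmp ht) _)
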